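/- arXiv:1705.09038 — 2 statements merged into one kernel-verified Lean document; each statement's English description precedes it below -/
import Mathlib

section
/- Let M be a unimodular lattice over ℤ and N ⊆ M a saturated nondegenerate sublattice with orthogonal complement N^⊥. Then N + N^⊥ has finite index in M equal to |disc(N)|, and |disc(N^⊥)| = |disc(N)|. -/
/-! The form identifies `M ⧸ N^⊥` with the dual `N^*`: as `N` is saturated, `M ⧸ N` is free, so
`N` is a direct summand, every functional on `N` extends to `M`, and by unimodularity that
extension is `B m` for some `m`. Under this identification `N` maps onto the image of the Gram
matrix `G` of `N`, so `M ⧸ (N + N^⊥) ≅ ℤ^r ⧸ G ℤ^r`, a group of order `|det G|` (Smith normal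
form). Since this index is finite, `(N^⊥)^⊥ = N`, and the same argument applied to `N^⊥` computes
the index as `|disc N^⊥|`. -/

namespace Submodule

variable {R M : Type*} [CommRing R] [AddCommGroup M] [Module R M]

theorem isTorsionFree_quotient_iff [IsDomain R] (S : Submodule R M) :
    Module.IsTorsionFree R (M ⧸ S) ↔ ∀ (m : M) (k : R), k ≠ 0 → k • m ∈ S → m ∈ S := by
  simp only [Module.isTorsionFree_iff_smul_eq_zero, (Quotient.mk_surjective S).forall,
    ← Quotient.mk_smul, Quotient.mk_eq_zero, or_iff_not_imp_left]
  exact forall_comm.trans (forall₂_congr fun _ _ => imp.swap)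

theorem exists_leftInverse_subtype [IsDomain R] [IsPrincipalIdealRing R] [Module.Finite R M]
    (S : Submodule R M) [Module.IsTorsionFree R (M ⧸ S)] :
    ∃ l : M →ₗ[R] S, l ∘ₗ S.subtype = LinearMap.id :=
  (((LinearMap.exact_subtype_mkQ S).split_tfae S.injective_subtype S.mkQ_surjective).out 0 1).mp
    (S.mkQ.exists_rightInverse_of_surjective (range_mkQ S))

theorem dualMap_subtype_surjective [IsDomain R] [IsPrincipalIdealRing R] [Module.Finite R M]
    (S : Submodule R M) [Module.IsTorsionFree R (M ⧸ S)] :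
    Function.Surjective S.subtype.dualMap := by
  obtain ⟨l, hl⟩ := S.exists_leftInverse_subtype
  exact fun f => ⟨f ∘ₗ l, by
    rw [LinearMap.dualMap_apply', LinearMap.comp_assoc, hl, LinearMap.comp_id]⟩

theorem natCard_quotient_comap_of_surjective {N : Type*} [AddCommGroup N] [Module R N]
    {f : M →ₗ[R] N} (hf : Function.Surjective f) (P : Submodule R N) :
    Nat.card (M ⧸ P.comap f) = Nat.card (N ⧸ P) := by
  have hker : LinearMap.ker (P.mkQ ∘ₗ f) = P.comap f := by
    rw [LinearMap.ker_comp, ker_mkQ]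
  exact Nat.card_congr ((quotEquivOfEq _ _ hker.symm).trans
    ((P.mkQ ∘ₗ f).quotKerEquivOfSurjective (P.mkQ_surjective.comp hf))).toEquiv

theorem exists_smul_mem_of_finite_quotient {M : Type*} [AddCommGroup M]
    (P : Submodule ℤ M) [Finite (M ⧸ P)] (y : M) : ∃ n : ℤ, n ≠ 0 ∧ n • y ∈ P := by
  refine ⟨addOrderOf (P.mkQ y), ?_, ?_⟩
  · exact_mod_cast (isOfFinAddOrder_of_finite _).addOrderOf_pos.ne'
  · rw [← Quotient.mk_eq_zero, Quotient.mk_smul, natCast_zsmul]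
    exact addOrderOf_nsmul_eq_zero _

end Submodule

namespace LinearMap

theorem eq_zero_of_finite_quotient {M N : Type*} [AddCommGroup M] [AddCommGroup N]
    [Module.IsTorsionFree ℤ N] (P : Submodule ℤ M) [Finite (M ⧸ P)] {f : M →ₗ[ℤ] N}
    (hP : P ≤ ker f) : f = 0 := by
  ext y
  obtain ⟨n, hn, hny⟩ := P.exists_smul_mem_of_finite_quotient y
  have : n • f y = 0 := by rw [← map_smul]; exact hP hny
  exact (smul_eq_zero_iff_right hn).mp this

section Determinant

variable {M : Type*} [AddCommGroup M] [Module.Free ℤ M] [Module.Finite ℤ M]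

theorem infinite_quotient_range_of_det_eq_zero {f : M →ₗ[ℤ] M} (hf : f.det = 0) :
    Infinite (M ⧸ range f) := by
  obtain ⟨ℓ, hℓf, hℓ⟩ : ∃ ℓ ∈ ker f.dualMap, ℓ ≠ 0 :=
    (ker f.dualMap).ne_bot_iff.mp (det_eq_zero_iff_ker_ne_bot.mp (by rwa [det_dualMap]))
  have hle : range f ≤ ker ℓ := by
    rintro _ ⟨x, rfl⟩
    exact LinearMap.congr_fun hℓf x
  obtain ⟨q, hq⟩ : ∃ q, (range f).liftQ ℓ hle q ≠ 0 := by
    by_contra! h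
    exact hℓ (LinearMap.ext fun x => h (Submodule.Quotient.mk x))
  refine Infinite.of_injective (fun k : ℤ => k • q) fun k l hkl => ?_
  have := congrArg ((range f).liftQ ℓ hle) hkl
  simp only [map_smul, smul_eq_mul] at this
  exact mul_right_cancel₀ hq this

-- When `det f = 0` both sides are `0`, the left one because `Nat.card` of an infinite type is `0`.
theorem natCard_quotient_range (f : M →ₗ[ℤ] M) : Nat.card (M ⧸ range f) = f.det.natAbs := by
  by_cases hf : f.det = 0
  · have := infinite_quotient_range_of_det_eq_zero hf
    rw [hf, Int.natAbs_zero, Nat.card_eq_zero_of_infinite]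
  · have hinj : Function.Injective f :=
      ker_eq_bot.mp (not_not.mp (mt det_eq_zero_iff_ker_ne_bot.mpr hf))
    rw [← (range f).natAbs_det_equiv (LinearEquiv.ofInjective f hinj)]
    rfl

end Determinant

theorem natCard_quotient_range_eq_natAbs_det_toMatrix {ι M M' : Type*} [Fintype ι]
    [DecidableEq ι] [AddCommGroup M] [AddCommGroup M'] (b : Module.Basis ι ℤ M)
    (b' : Module.Basis ι ℤ M') (g : M →ₗ[ℤ] M') :
    Nat.card (M' ⧸ range g) = (toMatrix b b' g).det.natAbs := by
  have := Module.Free.of_basis b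
  have := Module.Finite.of_basis b
  let e : M' ≃ₗ[ℤ] M := b'.repr ≪≫ₗ b.repr.symm
  have hrange : (range g).map (e : M' →ₗ[ℤ] M) = range (e ∘ₗ g) := by
    rw [range_comp]
  have htoMatrix : toMatrix b b (e ∘ₗ g) = toMatrix b b' g := by
    ext i j
    simp [toMatrix_apply, e]
  rw [Nat.card_congr (Submodule.Quotient.equiv _ _ e hrange).toEquiv, natCard_quotient_range,
    ← det_toMatrix b, htoMatrix]

end LinearMap

section Lattice

open LinearMap
open scoped Matrix

variable {M : Type*} [AddCommGroup M] {B : M →ₗ[ℤ] M →ₗ[ℤ] ℤ} {S T : Submodule ℤ M}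

theorem isTorsionFree_quotient_of_orthogonal (hT : ∀ m, m ∈ T ↔ ∀ x ∈ S, B m x = 0) :
    Module.IsTorsionFree ℤ (M ⧸ T) := by
  refine T.isTorsionFree_quotient_iff.mpr fun m k hk hkm => (hT m).mpr fun x hx => ?_
  have := (hT (k • m)).mp hkm x hx
  rwa [map_smul, LinearMap.smul_apply, smul_eq_zero_iff_right hk] at this

theorem natCard_quotient_sup_orthogonal [Module.Finite ℤ M] (hB : Function.Surjective B)
    [Module.IsTorsionFree ℤ (M ⧸ S)] (hT : ∀ m, m ∈ T ↔ ∀ x ∈ S, B m x = 0)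
    {ι : Type*} [Fintype ι] [DecidableEq ι] (bS : Module.Basis ι ℤ S) :
    Nat.card (M ⧸ (S ⊔ T)) = (Matrix.of fun i j => B (bS i : M) (bS j : M)).det.natAbs := by
  set φ := S.subtype.dualMap ∘ₗ B
  have hφ : Function.Surjective φ := S.dualMap_subtype_surjective.comp hB
  have hker : ker φ = T := by
    ext m
    simp [φ, hT, LinearMap.ext_iff]
  have hsup : S ⊔ T = (range (φ ∘ₗ S.subtype)).comap φ := by
    rw [range_comp, Submodule.range_subtype, Submodule.comap_map_eq, hker]
  have hGram : toMatrix bS bS.dualBasis (φ ∘ₗ S.subtype) =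
      (Matrix.of fun i j => B (bS i : M) (bS j : M))ᵀ := by
    ext i j
    simp [toMatrix_apply, φ]
  rw [hsup, Submodule.natCard_quotient_comap_of_surjective hφ,
    natCard_quotient_range_eq_natAbs_det_toMatrix bS bS.dualBasis, hGram, Matrix.det_transpose]

theorem mem_iff_forall_orthogonal_eq_zero (hB : Function.Injective B)
    (hsymm : ∀ x y, B x y = B y x) [Module.IsTorsionFree ℤ (M ⧸ S)]
    (hT : ∀ m, m ∈ T ↔ ∀ x ∈ S, B m x = 0) [Finite (M ⧸ (S ⊔ T))] (m : M) :
    m ∈ S ↔ ∀ x ∈ T, B m x = 0 := by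
  refine ⟨fun hm x hx => hsymm m x ▸ (hT x).mp hx m hm, fun hm => ?_⟩
  have hrad : ∀ t ∈ T, (∀ x ∈ T, B t x = 0) → t = 0 := fun t ht htT =>
    hB <| (eq_zero_of_finite_quotient (S ⊔ T) (sup_le ((hT t).mp ht) htT)).trans (map_zero B).symm
  obtain ⟨d, hd, hdm⟩ := (S ⊔ T).exists_smul_mem_of_finite_quotient m
  obtain ⟨s, hs, t, ht, hst⟩ := Submodule.mem_sup.mp hdm
  have ht0 : t = 0 := hrad t ht fun x hx => by
    rw [eq_sub_of_add_eq' hst, map_sub, LinearMap.sub_apply, map_smul, LinearMap.smul_apply,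
      hm x hx, hsymm, (hT x).mp hx s hs, smul_zero, sub_zero]
  exact S.isTorsionFree_quotient_iff.mp ‹_› m d hd (by rwa [← hst, ht0, add_zero])

end Lattice

/-- For a saturated nondegenerate sublattice `N` of a unimodular lattice `M` with
orthogonal complement `N^⊥`, the index of `N + N^⊥` in `M` equals `|disc N|`, and
`|disc N^⊥| = |disc N|`. -/
theorem stmt12 (n : ℕ) (B : (Fin n → ℤ) →ₗ[ℤ] (Fin n → ℤ) →ₗ[ℤ] ℤ)
    (hsymm : ∀ x y, B x y = B y x)
    (hunimod : Function.Bijective (B : (Fin n → ℤ) → ((Fin n → ℤ) →ₗ[ℤ] ℤ)))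
    (N : Submodule ℤ (Fin n → ℤ))
    (hsat : ∀ (m : Fin n → ℤ) (k : ℤ), k ≠ 0 → k • m ∈ N → m ∈ N)
    (Nperp : Submodule ℤ (Fin n → ℤ))
    (hperp : ∀ m, m ∈ Nperp ↔ ∀ x ∈ N, B m x = 0)
    (r r' : ℕ) (bN : Module.Basis (Fin r) ℤ N) (bP : Module.Basis (Fin r') ℤ Nperp)
    (hnd : (Matrix.of fun i j => B (bN i : Fin n → ℤ) (bN j : Fin n → ℤ)).det ≠ 0) :
    Nat.card ((Fin n → ℤ) ⧸ (N ⊔ Nperp)) =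
      (Matrix.of fun i j => B (bN i : Fin n → ℤ) (bN j : Fin n → ℤ)).det.natAbs ∧
    (Matrix.of fun i j => B (bP i : Fin n → ℤ) (bP j : Fin n → ℤ)).det.natAbs =
      (Matrix.of fun i j => B (bN i : Fin n → ℤ) (bN j : Fin n → ℤ)).det.natAbs := by
  have := N.isTorsionFree_quotient_iff.mpr hsat
  have hcard := natCard_quotient_sup_orthogonal hunimod.surjective hperp bN
  have : Finite ((Fin n → ℤ) ⧸ (N ⊔ Nperp)) :=
    Nat.finite_of_card_ne_zero (hcard ▸ Int.natAbs_ne_zero.mpr hnd)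
  have hN := mem_iff_forall_orthogonal_eq_zero hunimod.injective hsymm hperp
  have := isTorsionFree_quotient_of_orthogonal hperp
  refine ⟨hcard, ?_⟩
  rw [← natCard_quotient_sup_orthogonal hunimod.surjective hN bP, sup_comm, hcard]
end

section
/- Every finite subgroup of GL_n(ℤ) has order bounded by a constant depending only on n; concretely, the reduction map GL_n(ℤ) → GL_n(ℤ/3ℤ) is injective on any finite subgroup, so every finite subgroup of GL_n(ℤ) has order at most |GL_n(ℤ/3ℤ)|. -/
/-!
Let `g ≡ 1 (mod 3)` have prime order `p` and write `g = 1 + 3ᵏ E` with `k ≥ 1`. Expanding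
`(1 + 3ᵏ E)ᵖ = 1` and cancelling `3ᵏ` gives `3 ∣ E`: for `p ≠ 3` the linear term `p E` is the only
one not visibly divisible by `3`, and `p` is invertible mod `3`; for `p = 3` the whole cube
`3x + 3x² + x³` is divisible by `3ᵏ⁺²` because `k ≥ 1`. Hence `g - 1` is divisible by every power
of `3`, so `g = 1`. Every nontrivial element of finite order has a power of prime order, so the
kernel of reduction mod `3` meets every finite subgroup of `GLₙ(ℤ)` trivially.
-/

theorem exists_eq_nsmul_of_coprime {M : Type*} [AddCommGroup M] {a b : ℕ} (hab : a.Coprime b)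
    {x y : M} (h : b • x = a • y) : ∃ z, x = a • z := by
  obtain ⟨u, v, huv⟩ := Nat.isCoprime_iff_coprime.mpr hab
  refine ⟨u • x + v • y, ?_⟩
  calc x = (u * a + v * b) • x := by rw [huv, one_smul]
    _ = a • (u • x + v • y) := by
      rw [add_smul, mul_smul, mul_smul, natCast_zsmul, natCast_zsmul, h, smul_add, smul_comm a u,
        smul_comm a v]

section Ring

variable {R : Type*} [Ring R]

theorem exists_one_add_pow_eq_one_add_nsmul_add_mul_sq (x : R) (m : ℕ) :
    ∃ y, (1 + x) ^ m = 1 + m • x + y * x ^ 2 := by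
  induction m with
  | zero => exact ⟨0, by simp⟩
  | succ m ih =>
    obtain ⟨y, hy⟩ := ih
    refine ⟨m + y + y * x, ?_⟩
    rw [pow_succ, hy, succ_nsmul, nsmul_eq_mul]
    noncomm_ring

variable [IsAddTorsionFree R]

theorem exists_eq_three_nsmul_of_one_add_three_pow_nsmul_pow_eq_one {p k : ℕ} (hp : p.Prime)
    (hk : k ≠ 0) {E : R} (h : (1 + 3 ^ k • E) ^ p = 1) : ∃ F, E = 3 • F := by
  obtain ⟨j, rfl⟩ := Nat.exists_eq_add_one.mpr (Nat.pos_of_ne_zero hk)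
  rcases eq_or_ne p 3 with rfl | hp3
  · have hcube (x : R) : (1 + x) ^ 3 = 1 + (3 • x + 3 • x ^ 2 + x ^ 3) := by noncomm_ring
    have hexp : (1 + 3 ^ (j + 1) • E) ^ 3
        = 1 + 3 ^ (j + 2) • (E + 3 • (3 ^ j • E ^ 2 + 3 ^ (2 * j) • E ^ 3)) := by
      rw [hcube, smul_pow, smul_pow]
      module
    rw [hexp, add_eq_left, smul_eq_zero_iff_right (by positivity), add_eq_zero_iff_eq_neg] at h
    exact ⟨_, h.trans (smul_neg 3 _).symm⟩
  · obtain ⟨y, hy⟩ := exists_one_add_pow_eq_one_add_nsmul_add_mul_sq (3 ^ (j + 1) • E) p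
    have hsum : 3 ^ (j + 1) • (p • E + 3 • (3 ^ j • (y * E ^ 2))) = 0 := by
      rw [h, add_assoc, left_eq_add] at hy
      rw [← hy, smul_pow, mul_smul_comm]
      module
    rw [smul_eq_zero_iff_right (by positivity), add_eq_zero_iff_eq_neg, ← smul_neg] at hsum
    exact exists_eq_nsmul_of_coprime ((Nat.coprime_primes Nat.prime_three hp).mpr hp3.symm) hsum

theorem exists_eq_three_pow_nsmul_of_one_add_pow_eq_one {p : ℕ} (hp : p.Prime) {D : R}
    (hD : ∃ E, D = 3 • E) (h : (1 + D) ^ p = 1) (k : ℕ) : ∃ E, D = 3 ^ k • E := by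
  induction k with
  | zero => exact ⟨D, (one_smul ℕ D).symm⟩
  | succ k ih =>
    rcases k.eq_zero_or_pos with rfl | hk
    · simpa using hD
    obtain ⟨E, rfl⟩ := ih
    obtain ⟨F, rfl⟩ := exists_eq_three_nsmul_of_one_add_three_pow_nsmul_pow_eq_one hp hk.ne' h
    exact ⟨F, by rw [pow_succ, mul_smul]⟩

end Ring

theorem Subgroup.eq_one_of_isOfFinOrder_of_forall_pow_prime_eq_one {G : Type*} [Group G]
    (K : Subgroup G) (hK : ∀ g ∈ K, ∀ p : ℕ, p.Prime → g ^ p = 1 → g = 1) {g : G} (hg : g ∈ K)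
    (hfin : IsOfFinOrder g) : g = 1 := by
  by_contra hne
  obtain ⟨p, hp, hpg⟩ := Nat.exists_prime_and_dvd (mt orderOf_eq_one_iff.mp hne)
  have hord : orderOf (g ^ (orderOf g / p)) = p := orderOf_pow_orderOf_div hfin.orderOf_pos.ne' hpg
  have h1 := hK _ (K.pow_mem hg _) p hp (hord ▸ pow_orderOf_eq_one _)
  rw [h1, orderOf_one] at hord
  exact hp.one_lt.ne hord

namespace Matrix

instance instIsAddTorsionFree {m n α : Type*} [AddMonoid α] [IsAddTorsionFree α] :
    IsAddTorsionFree (Matrix m n α) :=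
  inferInstanceAs (IsAddTorsionFree (m → n → α))

theorem eq_zero_of_forall_exists_eq_pow_nsmul {m n : Type*} {q : ℕ} (hq : q ≠ 1)
    {D : Matrix m n ℤ} (h : ∀ k, ∃ E, D = q ^ k • E) : D = 0 := by
  ext i j
  by_contra hD
  obtain ⟨k, hk⟩ := (Int.finiteMultiplicity_iff (a := q)).mpr ⟨hq, hD⟩
  obtain ⟨E, rfl⟩ := h (k + 1)
  exact hk ⟨E i j, by simp⟩

theorem exists_eq_nsmul_of_map_intCast_eq_zero {m n : Type*} {q : ℕ} {M : Matrix m n ℤ}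
    (h : M.map (Int.castRingHom (ZMod q)) = 0) : ∃ E, M = q • E := by
  refine ⟨of fun i j => M i j / q, ?_⟩
  ext i j
  have hdvd := (ZMod.intCast_zmod_eq_zero_iff_dvd _ _).mp (congrFun₂ h i j)
  simp [Int.mul_ediv_cancel' hdvd]

theorem GeneralLinearGroup.eq_one_of_isOfFinOrder_of_map_eq_one {n : Type*} [Fintype n]
    [DecidableEq n] {g : GL n ℤ} (hg : IsOfFinOrder g)
    (h : Units.map (Int.castRingHom (ZMod 3)).mapMatrix.toMonoidHom g = 1) : g = 1 := by
  refine (Units.map (Int.castRingHom (ZMod 3)).mapMatrix.toMonoidHom).ker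
    |>.eq_one_of_isOfFinOrder_of_forall_pow_prime_eq_one (fun g hg p hp hgp => ?_)
      (MonoidHom.mem_ker.mpr h) hg
  have hD : ∃ E, (g : Matrix n n ℤ) - 1 = 3 • E := by
    apply exists_eq_nsmul_of_map_intCast_eq_zero
    have hg1 : (Int.castRingHom (ZMod 3)).mapMatrix (g : Matrix n n ℤ) = 1 :=
      congrArg Units.val (MonoidHom.mem_ker.mp hg)
    rw [← RingHom.mapMatrix_apply, map_sub, hg1, map_one, sub_self]
  have hpow : (1 + ((g : Matrix n n ℤ) - 1)) ^ p = 1 := by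
    rw [add_sub_cancel, ← Units.val_pow_eq_pow_val, hgp, Units.val_one]
  have hzero := eq_zero_of_forall_exists_eq_pow_nsmul (by norm_num)
    (exists_eq_three_pow_nsmul_of_one_add_pow_eq_one hp hD hpow)
  exact Units.ext (sub_eq_zero.mp hzero)

end Matrix

/-- Minkowski's lemma: reduction mod 3 is injective on any finite subgroup of `GLₙ(ℤ)`,
so every finite subgroup of `GLₙ(ℤ)` has order at most `|GLₙ(ℤ/3ℤ)|`. -/
theorem stmt15 (n : ℕ) (H : Subgroup (Matrix.GeneralLinearGroup (Fin n) ℤ))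
    (hH : Finite H) :
    Set.InjOn
      (Units.map ((Int.castRingHom (ZMod 3)).mapMatrix.toMonoidHom))
      (H : Set (Matrix.GeneralLinearGroup (Fin n) ℤ)) ∧
    Nat.card H ≤ Nat.card (Matrix (Fin n) (Fin n) (ZMod 3))ˣ := by
  have hinj : Set.InjOn (Units.map ((Int.castRingHom (ZMod 3)).mapMatrix.toMonoidHom))
      (H : Set (Matrix.GeneralLinearGroup (Fin n) ℤ)) := by
    intro g₁ hg₁ g₂ hg₂ heq
    have hfin : IsOfFinOrder (g₁ * g₂⁻¹) :=
      H.subtype.isOfFinOrder (isOfFinOrder_of_finite (⟨_, H.mul_mem hg₁ (H.inv_mem hg₂)⟩ : H))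
    refine mul_inv_eq_one.mp
      (Matrix.GeneralLinearGroup.eq_one_of_isOfFinOrder_of_map_eq_one hfin ?_)
    rw [map_mul, map_inv, heq, mul_inv_cancel]
  exact ⟨hinj, Nat.card_le_card_of_injective _ hinj.injective⟩
end
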